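/- Let K = {0} ∪ {2^{−n} : n ∈ ℕ} ⊆ ℝ. Then every f : K → ℝ admitting a continuous derivative on K is the restriction of some F ∈ C¹(ℝ); that is, C¹(K) = C¹(ℝ|K). -/

import Mathlib

open Set Filter Topology
open scoped NNReal ENNReal

noncomputable section

/-- `df` is a derivative of `f` on `K ⊆ ℝ`: at every `x ∈ K`,
`(f y - f x - df x * (y - x))/|y - x| → 0` as `y → x` within `K`. -/
def IsDerivOnReal (K : Set ℝ) (f df : ℝ → ℝ) : Prop :=
  ∀ x ∈ K, Filter.Tendsto (fun y => (f y - f x - df x * (y - x)) / |y - x|)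
    (𝓝[K \ {x}] x) (𝓝 0)

/-- The set `K = {0} ∪ {2^{-n} : n ∈ ℕ}`. -/
def geomSet : Set ℝ := insert 0 (Set.range fun n : ℕ => (2:ℝ)⁻¹ ^ n)

/-!
The points `2⁻ⁿ` are isolated in `K`, so only the first-order behaviour of `f` at `0` matters.
After subtracting `f 0 + df 0 * t`, the values `bₙ` left at the points `2⁻ⁿ` are `o(2⁻ⁿ)`, and
they are interpolated by a sum of bumps of height `bₙ` supported in the disjoint intervals
`[2⁻ⁿ - 2⁻ⁿ/4, 2⁻ⁿ + 2⁻ⁿ/4]`. The `n`-th bump has derivative `O(bₙ / 2⁻ⁿ) → 0`, and since at most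
one bump is nonzero at any point, the derivatives of the partial sums converge uniformly.
-/

open Function Metric

lemma exists_tsum_eq_of_support_subsingleton {β M : Type*} [AddCommMonoid M] [TopologicalSpace M]
    [Nonempty β] {f : β → M} (hf : (support f).Subsingleton) : ∃ b, ∑' k, f k = f b := by
  rcases hf.eq_empty_or_singleton with h | ⟨b, hb⟩
  · obtain rfl : f = 0 := support_eq_empty_iff.mp h
    exact ⟨Classical.arbitrary β, by simp⟩
  · refine ⟨b, tsum_eq_single b fun k hk => notMem_support.mp ?_⟩
    rwa [hb, mem_singleton_iff]

/-- Although `∑ B n` may diverge, at each `t` the tail of the series is a single term. -/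
lemma tendstoUniformly_sum_range_tsum_of_support_subsingleton {α E : Type*}
    [NormedAddCommGroup E] {c : ℕ → α → E} (hc : ∀ t, (support fun n => c n t).Subsingleton)
    {B : ℕ → ℝ} (hB : Tendsto B atTop (𝓝 0)) (hcB : ∀ n t, ‖c n t‖ ≤ B n) :
    TendstoUniformly (fun N t => ∑ n ∈ Finset.range N, c n t) (fun t => ∑' n, c n t) atTop := by
  rw [Metric.tendstoUniformly_iff]
  intro ε hε
  obtain ⟨N₀, hN₀⟩ := eventually_atTop.mp (hB.eventually (gt_mem_nhds hε))
  filter_upwards [eventually_ge_atTop N₀] with N hN t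
  have hsum : Summable fun n => c n t := summable_of_hasFiniteSupport (hc t).finite
  obtain ⟨m, hm⟩ := exists_tsum_eq_of_support_subsingleton
    ((hc t).preimage (add_left_injective N))
  rw [dist_eq_norm, ← hsum.sum_add_tsum_nat_add N, add_sub_cancel_left, hm]
  exact (hcB _ t).trans_lt (hN₀ _ (by omega))

theorem contDiff_one_tsum_of_pairwise_disjoint {E : Type*} [NormedAddCommGroup E]
    [NormedSpace ℝ E] {c : ℕ → ℝ → E} {s : ℕ → Set ℝ} (hc : ∀ n, ContDiff ℝ 1 (c n))
    (hs : Pairwise (Disjoint on s)) (hcs : ∀ n, tsupport (c n) ⊆ s n) {B : ℕ → ℝ}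
    (hB : Tendsto B atTop (𝓝 0)) (hcB : ∀ n t, ‖deriv (c n) t‖ ≤ B n) :
    ContDiff ℝ 1 fun t => ∑' n, c n t := by
  have hsubsingleton {g : ℕ → ℝ → E} (hg : ∀ n, support (g n) ⊆ s n) (t : ℝ) :
      (support fun n => g n t).Subsingleton := fun m hm n hn =>
    hs.eq (not_disjoint_iff.mpr ⟨t, hg m hm, hg n hn⟩)
  have hc_supp := hsubsingleton fun n => (subset_tsupport _).trans (hcs n)
  have hc'_supp := hsubsingleton fun n => support_deriv_subset.trans (hcs n)
  have hunif := tendstoUniformly_sum_range_tsum_of_support_subsingleton hc'_supp hB hcB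
  have hderiv (t : ℝ) : HasDerivAt (fun t => ∑' n, c n t) (∑' n, deriv (c n) t) t := by
    refine hasDerivAt_of_tendstoUniformly hunif (Eventually.of_forall fun N t => ?_)
      (fun t => (summable_of_hasFiniteSupport (hc_supp t).finite).hasSum.tendsto_sum_nat) t
    exact HasDerivAt.fun_sum fun n _ => ((hc n).differentiable one_ne_zero t).hasDerivAt
  rw [contDiff_one_iff_deriv, funext fun t => (hderiv t).deriv]
  refine ⟨fun t => (hderiv t).differentiableAt, hunif.continuous (Frequently.of_forall fun N => ?_)⟩
  exact continuous_finsetSum _ fun n _ => (hc n).continuous_deriv le_rfl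

lemma pairwise_disjoint_closedBall_inv_two_pow :
    Pairwise (Disjoint on fun n : ℕ => closedBall ((2:ℝ)⁻¹ ^ n) ((2:ℝ)⁻¹ ^ n / 4)) := by
  refine (pairwise_disjoint_on _).mpr fun m n hmn => closedBall_disjoint_closedBall ?_
  have hn : (0:ℝ) < 2⁻¹ ^ n := by positivity
  have hnm : (2:ℝ)⁻¹ ^ n ≤ 2⁻¹ ^ m / 2 := by
    calc (2:ℝ)⁻¹ ^ n ≤ 2⁻¹ ^ (m + 1) := pow_le_pow_of_le_one (by norm_num) (by norm_num) hmn
      _ = 2⁻¹ ^ m / 2 := by rw [pow_succ, div_eq_mul_inv]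
  rw [Real.dist_eq, abs_of_pos (by linarith)]
  linarith

lemma zero_notMem_closedBall_inv_two_pow (n : ℕ) :
    (0:ℝ) ∉ closedBall ((2:ℝ)⁻¹ ^ n) ((2:ℝ)⁻¹ ^ n / 4) := by
  have hn : (0:ℝ) < 2⁻¹ ^ n := by positivity
  rw [mem_closedBall, dist_comm, Real.dist_eq, sub_zero, abs_of_pos hn]
  linarith

lemma tsupport_const_mul_comp_div_subset (a : ℝ) {φ : ℝ → ℝ} (hφ : support φ ⊆ ball 0 1)
    (c : ℝ) {r : ℝ} (hr : 0 < r) : tsupport (fun t => a * φ ((t - c) / r)) ⊆ closedBall c r := by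
  refine closure_minimal (fun t ht => ?_) isClosed_closedBall
  have hball : ‖(t - c) / r‖ < 1 := mem_ball_zero_iff.mp (hφ (right_ne_zero_of_mul ht))
  rw [norm_div, Real.norm_of_nonneg hr.le, div_lt_one hr, ← dist_eq_norm] at hball
  exact hball.le

theorem exists_contDiff_interpolating_inv_two_pow {b : ℕ → ℝ}
    (hb : Tendsto (fun n => b n / (2:ℝ)⁻¹ ^ n) atTop (𝓝 0)) :
    ∃ G : ℝ → ℝ, ContDiff ℝ 1 G ∧ G 0 = 0 ∧ ∀ n : ℕ, G ((2:ℝ)⁻¹ ^ n) = b n := by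
  let φ : ContDiffBump (0:ℝ) := ⟨1 / 2, 1, by norm_num, by norm_num⟩
  obtain ⟨C, hC⟩ := Continuous.bounded_above_of_compact_support
    ((φ.contDiff (n := 1)).continuous_deriv le_rfl) φ.hasCompactSupport.deriv
  set x : ℕ → ℝ := fun n => (2:ℝ)⁻¹ ^ n
  have hx (n : ℕ) : 0 < x n := by positivity
  set c : ℕ → ℝ → ℝ := fun n t => b n * φ ((t - x n) / (x n / 4))
  have hc (n : ℕ) : ContDiff ℝ 1 (c n) :=
    contDiff_const.mul (φ.contDiff.comp (by fun_prop))
  have hc_deriv (n : ℕ) (t : ℝ) :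
      deriv (c n) t = b n * (deriv φ ((t - x n) / (x n / 4)) * (1 / (x n / 4))) := by
    have hφ := ((φ.contDiff (n := 1)).differentiable one_ne_zero
      ((t - x n) / (x n / 4))).hasDerivAt
    exact ((hφ.comp t (((hasDerivAt_id t).sub_const (x n)).div_const _)).const_mul (b n)).deriv
  have hcs (n : ℕ) : tsupport (c n) ⊆ closedBall (x n) (x n / 4) :=
    tsupport_const_mul_comp_div_subset (b n) φ.support_eq.subset (x n) (by linarith [hx n])
  have hc_eq_zero (n : ℕ) {t : ℝ} (ht : t ∉ closedBall (x n) (x n / 4)) : c n t = 0 :=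
    image_eq_zero_of_notMem_tsupport fun h => ht (hcs n h)
  refine ⟨fun t => ∑' n, c n t,
    contDiff_one_tsum_of_pairwise_disjoint hc pairwise_disjoint_closedBall_inv_two_pow hcs
      (B := fun n => 4 * C * |b n / x n|) ?_ fun n t => ?_, ?_, fun m => ?_⟩
  · simpa only [abs_zero, mul_zero] using hb.abs.const_mul (4 * C)
  · have h4 : 0 < 4 / x n := div_pos four_pos (hx n)
    calc ‖deriv (c n) t‖ = |b n| * ‖deriv φ ((t - x n) / (x n / 4))‖ * (4 / x n) := by
          rw [hc_deriv, norm_mul, norm_mul, one_div_div, Real.norm_of_nonneg h4.le,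
            Real.norm_eq_abs, mul_assoc]
      _ ≤ |b n| * C * (4 / x n) := by gcongr; exact hC _
      _ = 4 * C * |b n / x n| := by rw [abs_div, abs_of_pos (hx n)]; ring
  · simp [hc_eq_zero _ (zero_notMem_closedBall_inv_two_pow _)]
  · show ∑' n, c n (x m) = b m
    have hm : x m ∈ closedBall (x m) (x m / 4) := mem_closedBall_self (by linarith [hx m])
    rw [tsum_eq_single m fun n hnm => hc_eq_zero n fun hn =>
      (pairwise_disjoint_closedBall_inv_two_pow hnm).notMem_of_mem_right hm hn]
    have hφ0 : φ 0 = 1 := φ.one_of_mem_closedBall (mem_closedBall_self (by norm_num))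
    simp [c, hφ0]

lemma tendsto_inv_two_pow_nhdsWithin_geomSet :
    Tendsto (fun n : ℕ => (2:ℝ)⁻¹ ^ n) atTop (𝓝[geomSet \ {0}] 0) :=
  tendsto_nhdsWithin_of_tendsto_nhds_of_eventually_within _
    (tendsto_pow_atTop_nhds_zero_of_lt_one (by norm_num) (by norm_num))
    (Eventually.of_forall fun n => ⟨mem_insert_of_mem _ ⟨n, rfl⟩, by simp⟩)

lemma IsDerivOnReal.tendsto_remainder_div_inv_two_pow {f df : ℝ → ℝ}
    (hf : IsDerivOnReal geomSet f df) :
    Tendsto (fun n : ℕ => (f (2⁻¹ ^ n) - f 0 - df 0 * 2⁻¹ ^ n) / (2:ℝ)⁻¹ ^ n) atTop (𝓝 0) := by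
  refine ((hf 0 (mem_insert 0 _)).comp tendsto_inv_two_pow_nhdsWithin_geomSet).congr fun n => ?_
  simp only [comp_apply, sub_zero, abs_of_pos (by positivity : (0:ℝ) < 2⁻¹ ^ n)]

/-- For `K = {0} ∪ {2^{-n} : n ∈ ℕ}`, every `f` admitting a continuous derivative on
`K` is the restriction of a `C¹` function on `ℝ`: `C¹(K) = C¹(ℝ|K)`. -/
theorem geomSet_c1_eq_restriction :
    ∀ f df : ℝ → ℝ, ContinuousOn df geomSet → IsDerivOnReal geomSet f df →
      ∃ F : ℝ → ℝ, ContDiff ℝ 1 F ∧ EqOn F f geomSet := by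
  intro f df _ hf
  obtain ⟨G, hG, hG0, hGx⟩ :=
    exists_contDiff_interpolating_inv_two_pow hf.tendsto_remainder_div_inv_two_pow
  refine ⟨fun t => f 0 + df 0 * t + G t, by fun_prop, ?_⟩
  rintro _ (rfl | ⟨n, rfl⟩)
  · simp [hG0]
  · simp only [hGx]
    ring

end
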